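/- arXiv:1512.04349 — 4 statements merged into one kernel-verified Lean document; each statement's English description precedes it below -/
import Mathlib

section
/- If f, g : [0,1] → ℝ are continuous and both nondecreasing, then d_F(f, g) = max(|f(0) − g(0)|, |f(1) − g(1)|). -/
open Set

/-- A valid reparametrization of `[0,1]`: a continuous strictly increasing
bijection of `[0,1]` onto itself fixing the endpoints. -/
def IsReparam (f : ℝ → ℝ) : Prop :=
  ContinuousOn f (Set.Icc 0 1) ∧ StrictMonoOn f (Set.Icc 0 1) ∧ f 0 = 0 ∧ f 1 = 1

/-- The Fréchet distance between two curves `τ, π : [0,1] → ℝ`: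
`inf_f sup_{t ∈ [0,1]} |τ(f(t)) - π(t)|` over reparametrizations `f`. -/
noncomputable def frechetDist (τ π : ℝ → ℝ) : ℝ :=
  ⨅ f : {f : ℝ → ℝ // IsReparam f}, ⨆ t : Set.Icc (0:ℝ) 1, |τ (f.1 ↑t) - π ↑t|

/-- `τ` is the polygonal curve on `[0,1]` with the `m` vertices `w 0, …, w (m-1)`
attained at parameters `t 0 = 0 < t 1 < … < t (m-1) = 1`, obtained by linear
interpolation. -/
def IsPolyOn (τ : ℝ → ℝ) (m : ℕ) (t w : ℕ → ℝ) : Prop :=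
  2 ≤ m ∧ t 0 = 0 ∧ t (m - 1) = 1 ∧ (∀ i, i + 1 < m → t i < t (i + 1)) ∧
  (∀ i, i + 1 < m → ∀ u ∈ Set.Icc (t i) (t (i + 1)),
    τ u = w i + (u - t i) / (t (i + 1) - t i) * (w (i + 1) - w i))

/-- `τ` is a polygonal curve (with finitely many vertices). -/
def IsPolyCurve (τ : ℝ → ℝ) : Prop := ∃ m t w, IsPolyOn τ m t w

/-- `c` is a polygonal curve with at most `ℓ` vertices, i.e. an element of `Δ_ℓ`. -/
def InDeltaL (ℓ : ℕ) (c : ℝ → ℝ) : Prop := ∃ m t w, m ≤ ℓ ∧ IsPolyOn c m t w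

/-- General position of the vertex sequence `w 0, …, w (m-1)`: pairwise distinct
vertex values, pairwise distinct differences, and no vertex inside the closed
interval spanned by its two neighbours. -/
def GenPos (m : ℕ) (w : ℕ → ℝ) : Prop :=
  (∀ i j, i < m → j < m → i ≠ j → w i ≠ w j) ∧
  (∀ i j p q, i < m → j < m → p < m → q < m → i ≠ j → p ≠ q →
      (i, j) ≠ (p, q) → w i - w j ≠ w p - w q) ∧
  (∀ i, i + 2 < m → w (i + 1) ∉ Set.uIcc (w i) (w (i + 2)))

/-- The parameters `s 0 = 0 < s 1 < … < s (ℓ-1) = 1` define a `δ`-signature of the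
curve `τ` (Definition 3.3 of the paper, `0`-indexed): non-degeneracy,
direction-preservation, minimum edge length and range conditions. -/
def IsSignature (δ : ℝ) (τ : ℝ → ℝ) (ℓ : ℕ) (s : ℕ → ℝ) : Prop :=
  2 ≤ ℓ ∧ s 0 = 0 ∧ s (ℓ - 1) = 1 ∧ (∀ i, i + 1 < ℓ → s i < s (i + 1)) ∧
  (∀ i, 1 ≤ i → i + 1 < ℓ → τ (s i) ∉ Set.uIcc (τ (s (i - 1))) (τ (s (i + 1)))) ∧
  (∀ i, i + 1 < ℓ → ∀ a b : ℝ, s i ≤ a → a < b → b ≤ s (i + 1) →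
      (τ (s i) < τ (s (i + 1)) → τ a - τ b ≤ 2 * δ) ∧
      (τ (s (i + 1)) < τ (s i) → τ b - τ a ≤ 2 * δ)) ∧
  (∀ i, 1 ≤ i → i + 3 ≤ ℓ → 2 * δ < |τ (s (i + 1)) - τ (s i)|) ∧
  δ < |τ (s 1) - τ (s 0)| ∧ δ < |τ (s (ℓ - 1)) - τ (s (ℓ - 2))| ∧
  (∀ i, 1 ≤ i → i + 3 ≤ ℓ → ∀ a ∈ Set.Icc (s i) (s (i + 1)),
      τ a ∈ Set.uIcc (τ (s i)) (τ (s (i + 1)))) ∧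
  (2 < ℓ → ∀ a ∈ Set.Icc (s 0) (s 1),
      τ a ∈ Set.uIcc (τ (s 0)) (τ (s 1)) ∪ Set.Icc (τ (s 0) - δ) (τ (s 0) + δ)) ∧
  (2 < ℓ → ∀ a ∈ Set.Icc (s (ℓ - 2)) (s (ℓ - 1)),
      τ a ∈ Set.uIcc (τ (s (ℓ - 2))) (τ (s (ℓ - 1))) ∪
        Set.Icc (τ (s (ℓ - 1)) - δ) (τ (s (ℓ - 1)) + δ)) ∧
  (ℓ = 2 → ∀ a ∈ Set.Icc (s 0) (s 1),
      τ a ∈ Set.uIcc (τ (s 0)) (τ (s 1)) ∪ Set.Icc (τ (s 0) - δ) (τ (s 0) + δ) ∪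
        Set.Icc (τ (s 1) - δ) (τ (s 1) + δ))

/-! Every reparametrization fixes `0` and `1`, so each supremum in the infimum is at least
the endpoint bound. Conversely, adding `ε x` turns `f` and `g` (extended by constants off
`[0,1]`) into order automorphisms `F`, `G` of `ℝ`. With `A` the increasing affine map sending
`[G 0, G 1]` onto `[F 0, F 1]`, the reparametrization `ψ = F⁻¹ ∘ A ∘ G` makes `F ∘ ψ - G` a convex
combination of `F 0 - G 0` and `F 1 - G 1`, and undoing the tilt costs at most `ε`. -/

open Filter

lemma isReparam_id : IsReparam id :=
  ⟨continuousOn_id, strictMono_id.strictMonoOn _, rfl, rfl⟩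

lemma IsReparam.mapsTo {ψ : ℝ → ℝ} (hψ : IsReparam ψ) : MapsTo ψ (Icc 0 1) (Icc 0 1) :=
  fun t ht ↦ by
    obtain ⟨-, hmono, h0, h1⟩ := hψ
    exact ⟨h0 ▸ hmono.monotoneOn (left_mem_Icc.2 zero_le_one) ht ht.1,
      h1 ▸ hmono.monotoneOn ht (right_mem_Icc.2 zero_le_one) ht.2⟩

lemma max_abs_sub_le_iSup_of_isReparam {τ π ψ : ℝ → ℝ} (hτ : ContinuousOn τ (Icc 0 1))
    (hπ : ContinuousOn π (Icc 0 1)) (hψ : IsReparam ψ) :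
    max |τ 0 - π 0| |τ 1 - π 1| ≤ ⨆ t : Icc (0 : ℝ) 1, |τ (ψ t) - π t| := by
  have hbdd : BddAbove (range fun t : Icc (0 : ℝ) 1 ↦ |τ (ψ t) - π t|) :=
    (isCompact_range (((hτ.comp hψ.1 hψ.mapsTo).sub hπ).abs.domRestrict)).bddAbove
  obtain ⟨-, -, h0, h1⟩ := hψ
  refine max_le ?_ ?_
  · simpa [h0] using le_ciSup hbdd ⟨0, left_mem_Icc.2 zero_le_one⟩
  · simpa [h1] using le_ciSup hbdd ⟨1, right_mem_Icc.2 zero_le_one⟩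

lemma le_frechetDist {τ π : ℝ → ℝ} {C : ℝ}
    (h : ∀ ψ, IsReparam ψ → C ≤ ⨆ t : Icc (0 : ℝ) 1, |τ (ψ t) - π t|) : C ≤ frechetDist τ π :=
  have : Nonempty {ψ // IsReparam ψ} := ⟨⟨id, isReparam_id⟩⟩
  le_ciInf fun ψ ↦ h ψ.1 ψ.2

lemma frechetDist_le {τ π ψ : ℝ → ℝ} {C : ℝ} (hψ : IsReparam ψ)
    (h : ∀ t ∈ Icc (0 : ℝ) 1, |τ (ψ t) - π t| ≤ C) : frechetDist τ π ≤ C :=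
  have : Nonempty (Icc (0 : ℝ) 1) := ⟨⟨0, left_mem_Icc.2 zero_le_one⟩⟩
  (ciInf_le ⟨0, by rintro _ ⟨φ, rfl⟩; exact Real.iSup_nonneg fun _ ↦ abs_nonneg _⟩ ⟨ψ, hψ⟩).trans
    (ciSup_le fun t ↦ h t t.2)

lemma abs_one_sub_mul_add_mul_le_max {𝕜 : Type*} [Field 𝕜] [LinearOrder 𝕜] [IsStrictOrderedRing 𝕜]
    {s : 𝕜} (hs : s ∈ Icc 0 1) (u v : 𝕜) : |(1 - s) * u + s * v| ≤ max |u| |v| :=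
  calc |(1 - s) * u + s * v| ≤ (1 - s) * |u| + s * |v| := by
        refine (abs_add_le _ _).trans_eq ?_
        rw [abs_mul, abs_mul, abs_of_nonneg (sub_nonneg.2 hs.2), abs_of_nonneg hs.1]
    _ ≤ (1 - s) * max |u| |v| + s * max |u| |v| := by
        have := hs.1
        have := sub_nonneg.2 hs.2
        gcongr
        exacts [le_max_left _ _, le_max_right _ _]
    _ = max |u| |v| := by ring

lemma exists_isReparam_abs_sub_le (F G : ℝ ≃o ℝ) :
    ∃ ψ, IsReparam ψ ∧ ∀ t ∈ Icc (0 : ℝ) 1, |F (ψ t) - G t| ≤ max |F 0 - G 0| |F 1 - G 1| := by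
  have hG : G 0 < G 1 := G.strictMono one_pos
  set σ : ℝ → ℝ := fun t ↦ (G t - G 0) / (G 1 - G 0) with hσ
  have hσ_mono : StrictMono σ := fun a b hab ↦ by
    have := G.strictMono hab
    simp only [hσ]
    gcongr
  have hσ_mem : ∀ t ∈ Icc (0 : ℝ) 1, σ t ∈ Icc 0 1 := fun t ht ↦
    ⟨div_nonneg (sub_nonneg.2 (G.monotone ht.1)) (by linarith),
      (div_le_one (by linarith)).2 (by linarith [G.monotone ht.2])⟩
  have hGσ : ∀ t, G t = G 0 + σ t * (G 1 - G 0) := fun t ↦ by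
    simp only [hσ, div_mul_cancel₀ _ (sub_pos.2 hG).ne', add_sub_cancel]
  have hF : F 0 < F 1 := F.strictMono one_pos
  refine ⟨fun t ↦ F.symm (F 0 + σ t * (F 1 - F 0)), ⟨?_, ?_, ?_, ?_⟩, fun t ht ↦ ?_⟩
  · exact (F.symm.continuous.comp (continuous_const.add
      (((G.continuous.sub continuous_const).div_const _).mul continuous_const))).continuousOn
  · exact (F.symm.strictMono.comp fun a b hab ↦ by
      have := hσ_mono hab; gcongr).strictMonoOn _
  · simp [hσ]
  · simp [hσ, div_self (sub_pos.2 hG).ne']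
  · calc |F (F.symm (F 0 + σ t * (F 1 - F 0))) - G t|
        = |(1 - σ t) * (F 0 - G 0) + σ t * (F 1 - G 1)| := by
          rw [F.apply_symm_apply, hGσ t]; ring_nf
      _ ≤ _ := abs_one_sub_mul_add_mul_le_max (hσ_mem t ht) _ _

noncomputable def tilt (f : ℝ → ℝ) (ε x : ℝ) : ℝ :=
  f (projIcc 0 1 zero_le_one x) + ε * x

section Tilt

variable {f : ℝ → ℝ} {ε : ℝ}

lemma tilt_of_mem {x : ℝ} (hx : x ∈ Icc 0 1) : tilt f ε x = f x + ε * x := by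
  rw [tilt, projIcc_of_mem _ hx]

lemma strictMono_tilt (hfm : MonotoneOn f (Icc 0 1)) (hε : 0 < ε) : StrictMono (tilt f ε) :=
  Monotone.add_strictMono (fun _ _ h ↦ hfm (Subtype.mem _) (Subtype.mem _) (monotone_projIcc _ h))
    (strictMono_mul_left_of_pos hε)

lemma continuous_tilt (hf : ContinuousOn f (Icc 0 1)) : Continuous (tilt f ε) :=
  (hf.comp_continuous (continuous_subtype_val.comp continuous_projIcc) fun _ ↦ Subtype.mem _).add
    (continuous_const.mul continuous_id)

lemma surjective_tilt (hf : ContinuousOn f (Icc 0 1)) (hε : 0 < ε) :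
    Function.Surjective (tilt f ε) := by
  refine (continuous_tilt hf).surjective ?_ ?_
  · have : ∀ᶠ x : ℝ in atTop, f 1 = f (projIcc 0 1 zero_le_one x) :=
      (eventually_ge_atTop 1).mono fun x hx ↦ by rw [projIcc_of_right_le _ hx]
    exact (tendsto_const_nhds.congr' this).add_atTop (tendsto_id.const_mul_atTop hε :)
  · have : ∀ᶠ x : ℝ in atBot, f 0 = f (projIcc 0 1 zero_le_one x) :=
      (eventually_le_atBot 0).mono fun x hx ↦ by rw [projIcc_of_le_left _ hx]
    exact (tendsto_const_nhds.congr' this).add_atBot (tendsto_id.const_mul_atBot hε :)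

noncomputable def tiltIso (hf : ContinuousOn f (Icc 0 1)) (hfm : MonotoneOn f (Icc 0 1))
    (hε : 0 < ε) : ℝ ≃o ℝ :=
  StrictMono.orderIsoOfSurjective _ (strictMono_tilt hfm hε) (surjective_tilt hf hε)

@[simp]
lemma tiltIso_apply (hf : ContinuousOn f (Icc 0 1)) (hfm : MonotoneOn f (Icc 0 1))
    (hε : 0 < ε) (x : ℝ) : tiltIso hf hfm hε x = tilt f ε x :=
  rfl

lemma tilt_sub_tilt_of_mem {g : ℝ → ℝ} {x : ℝ} (hx : x ∈ Icc 0 1) :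
    tilt f ε x - tilt g ε x = f x - g x := by
  rw [tilt_of_mem hx, tilt_of_mem hx]; ring

lemma abs_sub_le_abs_tilt_sub_add {g : ℝ → ℝ} (hε : 0 ≤ ε) {x t : ℝ} (hx : x ∈ Icc 0 1)
    (ht : t ∈ Icc 0 1) : |f x - g t| ≤ |tilt f ε x - tilt g ε t| + ε := by
  have hdrift : |ε * (x - t)| ≤ ε := by
    rw [abs_mul, abs_of_nonneg hε]
    exact mul_le_of_le_one_right hε
      (abs_sub_le_iff.2 ⟨by linarith [hx.2, ht.1], by linarith [hx.1, ht.2]⟩)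
  calc |f x - g t| = |(tilt f ε x - tilt g ε t) - ε * (x - t)| := by
        rw [tilt_of_mem hx, tilt_of_mem ht]; ring_nf
    _ ≤ |tilt f ε x - tilt g ε t| + |ε * (x - t)| := abs_sub _ _
    _ ≤ |tilt f ε x - tilt g ε t| + ε := by gcongr

end Tilt

/-- for continuous nondecreasing `f, g : [0,1] → ℝ`, the Fréchet
distance equals `max (|f 0 - g 0|) (|f 1 - g 1|)`. -/
theorem frechet_dist_monotone (f g : ℝ → ℝ)
    (hf : ContinuousOn f (Set.Icc 0 1)) (hg : ContinuousOn g (Set.Icc 0 1))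
    (hfm : MonotoneOn f (Set.Icc 0 1)) (hgm : MonotoneOn g (Set.Icc 0 1)) :
    frechetDist f g = max |f 0 - g 0| |f 1 - g 1| := by
  refine le_antisymm (le_of_forall_pos_le_add fun ε hε ↦ ?_)
    (le_frechetDist fun ψ hψ ↦ max_abs_sub_le_iSup_of_isReparam hf hg hψ)
  obtain ⟨ψ, hψ, hbound⟩ := exists_isReparam_abs_sub_le (tiltIso hf hfm hε) (tiltIso hg hgm hε)
  refine frechetDist_le hψ fun t ht ↦ (abs_sub_le_abs_tilt_sub_add hε.le (hψ.mapsTo ht) ht).trans ?_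
  have htilt := hbound t ht
  simp only [tiltIso_apply, tilt_sub_tilt_of_mem (left_mem_Icc.2 zero_le_one),
    tilt_sub_tilt_of_mem (right_mem_Icc.2 zero_le_one)] at htilt
  gcongr
end

section
/- For any δ ≥ 0, any curve τ : [0,1] → ℝ, and any δ-signature σ of τ, it holds that d_F(σ, τ) ≤ δ. -/
/-!
On an edge of the signature rising from `A` to `B`, the curve `τ` stays in `[A - δ, B + δ]` and
never drops by more than `2δ`. So the running maximum `M` and the running minimum to the right `N`
both stay within `2δ` of `τ`, on opposite sides, and `(M + N) / 2` is a continuous monotone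
function within `δ` of `τ`; clamped to `[A, B]` it runs from `A` to `B`. Read as a position on the
corresponding edge of `σ`, it is a weakly monotone matching of width `δ`. Mixing in a little of the
identity makes it strictly monotone at the cost of an arbitrary `ε > 0`, and the matchings of the
edges glue to a reparametrization of `[0, 1]`.
-/

open Set

section RunningExtremum

variable {α β : Type*} [ConditionallyCompleteLinearOrder α] [TopologicalSpace α] [OrderTopology α]
  [ConditionallyCompleteLinearOrder β] [TopologicalSpace β] [OrderTopology β]
  {g : α → β} {p q : α}

theorem ContinuousOn.exists_runningMax (hpq : p ≤ q) (hg : ContinuousOn g (Icc p q)) :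
    ∃ M : α → β, ContinuousOn M (Icc p q) ∧ MonotoneOn M (Icc p q) ∧
      ∀ t ∈ Icc p q, IsGreatest (g '' Icc p t) (M t) := by
  set G := IccExtend hpq ((Icc p q).domRestrict g)
  have hG : Continuous G := hg.domRestrict.Icc_extend'
  have hGg : EqOn G g (Icc p q) := fun t ht => IccExtend_of_mem hpq _ ht
  -- The running maximum is a supremum over the fixed compact set `Icc p q`.
  have himage : ∀ t ∈ Icc p q, (fun u => G (min u t)) '' Icc p q = g '' Icc p t := by
    intro t ht
    ext y
    constructor
    · rintro ⟨u, hu, rfl⟩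
      have hmem : min u t ∈ Icc p t := ⟨le_min hu.1 ht.1, min_le_right u t⟩
      exact ⟨min u t, hmem, (hGg ⟨hmem.1, hmem.2.trans ht.2⟩).symm⟩
    · rintro ⟨u, hu, rfl⟩
      refine ⟨u, ⟨hu.1, hu.2.trans ht.2⟩, ?_⟩
      simp only [min_eq_left hu.2]
      exact hGg ⟨hu.1, hu.2.trans ht.2⟩
  have hgreatest : ∀ t ∈ Icc p q, IsGreatest (g '' Icc p t) (sSup (g '' Icc p t)) := fun t ht =>
    (isCompact_Icc.image_of_continuousOn (hg.mono (Icc_subset_Icc_right ht.2))).isGreatest_sSup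
      ((nonempty_Icc.2 ht.1).image g)
  refine ⟨fun t => sSup (g '' Icc p t), ?_, ?_, hgreatest⟩
  · have hcont : Continuous fun t => sSup ((fun u => G (min u t)) '' Icc p q) :=
      isCompact_Icc.continuous_sSup (f := fun t u => G (min u t)) (by fun_prop)
    exact hcont.continuousOn.congr fun t ht => by simp only [himage t ht]
  · intro a ha b hb hab
    exact (hgreatest a ha).mono (hgreatest b hb) (image_mono (Icc_subset_Icc_right hab))

open OrderDual in
theorem ContinuousOn.exists_runningMin (hpq : p ≤ q) (hg : ContinuousOn g (Icc p q)) :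
    ∃ N : α → β, ContinuousOn N (Icc p q) ∧ MonotoneOn N (Icc p q) ∧
      ∀ t ∈ Icc p q, IsLeast (g '' Icc t q) (N t) := by
  have hg' : ContinuousOn (toDual ∘ g ∘ ofDual) (Icc (toDual q) (toDual p)) := by
    rw [Icc_toDual]; exact hg
  obtain ⟨M, hMc, hMm, hM⟩ :=
    ContinuousOn.exists_runningMax (α := αᵒᵈ) (β := βᵒᵈ) (p := toDual q) (q := toDual p) hpq hg'
  rw [Icc_toDual] at hMc hMm
  refine ⟨ofDual ∘ M ∘ toDual, hMc, fun a ha b hb hab => hMm hb ha hab, fun t ht => ?_⟩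
  have := hM (toDual t) (by rw [Icc_toDual]; exact ht)
  rw [Icc_toDual] at this
  exact this

end RunningExtremum

theorem abs_max_min_sub_le {a b x y δ : ℝ} (hx : |x - y| ≤ δ) (hya : a - δ ≤ y) (hyb : y ≤ b + δ) :
    |max a (min b x) - y| ≤ δ := by
  obtain ⟨hx₁, hx₂⟩ := abs_le.1 hx
  refine abs_le.2 ⟨?_, ?_⟩
  · linarith [le_max_right a (min b x), le_min (by linarith : y - δ ≤ b) (by linarith : y - δ ≤ x)]
  · linarith [max_le (by linarith : a ≤ y + δ) ((min_le_right b x).trans (by linarith : x ≤ y + δ))]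

theorem exists_monotoneOn_abs_sub_le {g : ℝ → ℝ} {p q δ : ℝ} (hpq : p ≤ q)
    (hg : ContinuousOn g (Icc p q)) (hle : g p ≤ g q)
    (hlo : ∀ t ∈ Icc p q, g p - δ ≤ g t) (hhi : ∀ t ∈ Icc p q, g t ≤ g q + δ)
    (hdrop : ∀ a ∈ Icc p q, ∀ b ∈ Icc p q, a ≤ b → g a - g b ≤ 2 * δ) :
    ∃ V : ℝ → ℝ, ContinuousOn V (Icc p q) ∧ MonotoneOn V (Icc p q) ∧ V p = g p ∧ V q = g q ∧
      ∀ t ∈ Icc p q, |V t - g t| ≤ δ := by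
  obtain ⟨M, hMc, hMm, hM⟩ := hg.exists_runningMax hpq
  obtain ⟨N, hNc, hNm, hN⟩ := hg.exists_runningMin hpq
  have hp : p ∈ Icc p q := left_mem_Icc.2 hpq
  have hq : q ∈ Icc p q := right_mem_Icc.2 hpq
  have hMg : ∀ t ∈ Icc p q, g t ≤ M t ∧ M t ≤ g t + 2 * δ := by
    intro t ht
    obtain ⟨⟨u, hu, hMu⟩, hMub⟩ := hM t ht
    refine ⟨hMub ⟨t, ⟨ht.1, le_rfl⟩, rfl⟩, ?_⟩
    linarith [hdrop u ⟨hu.1, hu.2.trans ht.2⟩ t ht hu.2]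
  have hNg : ∀ t ∈ Icc p q, N t ≤ g t ∧ g t - 2 * δ ≤ N t := by
    intro t ht
    obtain ⟨⟨u, hu, hNu⟩, hNlb⟩ := hN t ht
    refine ⟨hNlb ⟨t, ⟨le_rfl, ht.2⟩, rfl⟩, ?_⟩
    linarith [hdrop t ht u ⟨ht.1.trans hu.1, hu.2⟩ hu.1]
  have hMp : M p = g p := (hM p hp).unique (by simp)
  have hNq : N q = g q := (hN q hq).unique (by simp)
  refine ⟨fun t => max (g p) (min (g q) ((M t + N t) / 2)), by fun_prop, ?_, ?_, ?_, ?_⟩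
  · intro a ha b hb hab
    have hMab := hMm ha hb hab
    have hNab := hNm ha hb hab
    exact max_le_max le_rfl (min_le_min le_rfl (by linarith))
  · have hNp := (hNg p hp).1
    exact max_eq_left ((min_le_right _ _).trans (by linarith))
  · have hMq := (hMg q hq).1
    dsimp only
    rw [min_eq_left (by linarith)]
    exact max_eq_right hle
  · intro t ht
    obtain ⟨hMt₁, hMt₂⟩ := hMg t ht
    obtain ⟨hNt₁, hNt₂⟩ := hNg t ht
    exact abs_max_min_sub_le (abs_le.2 ⟨by linarith, by linarith⟩) (hlo t ht) (hhi t ht)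

theorem exists_monotone_param_abs_sub_le {g : ℝ → ℝ} {p q δ : ℝ} (hpq : p ≤ q)
    (hg : ContinuousOn g (Icc p q)) (hne : g p ≠ g q)
    (hrange : ∀ t ∈ Icc p q, g t ∈ Icc (min (g p) (g q) - δ) (max (g p) (g q) + δ))
    (hdir : ∀ a ∈ Icc p q, ∀ b ∈ Icc p q, a ≤ b →
      (g p < g q → g a - g b ≤ 2 * δ) ∧ (g q < g p → g b - g a ≤ 2 * δ)) :
    ∃ r : ℝ → ℝ, ContinuousOn r (Icc p q) ∧ MonotoneOn r (Icc p q) ∧ r p = 0 ∧ r q = 1 ∧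
      ∀ t ∈ Icc p q, |g p + r t * (g q - g p) - g t| ≤ δ := by
  wlog hlt : g p < g q generalizing g
  · have hgt : g q < g p := lt_of_le_of_ne (not_lt.1 hlt) hne.symm
    have hrange' : ∀ t ∈ Icc p q,
        (-g) t ∈ Icc (min ((-g) p) ((-g) q) - δ) (max ((-g) p) ((-g) q) + δ) := by
      intro t ht
      obtain ⟨hlo, hhi⟩ := hrange t ht
      simp only [Pi.neg_apply, min_neg_neg, max_neg_neg, mem_Icc]
      constructor <;> linarith
    have hdir' : ∀ a ∈ Icc p q, ∀ b ∈ Icc p q, a ≤ b →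
        ((-g) p < (-g) q → (-g) a - (-g) b ≤ 2 * δ) ∧
          ((-g) q < (-g) p → (-g) b - (-g) a ≤ 2 * δ) := by
      intro a ha b hb hab
      have hdrop := (hdir a ha b hb hab).2 hgt
      refine ⟨fun _ => ?_, fun h => absurd h (neg_lt_neg hgt).not_gt⟩
      simp only [Pi.neg_apply]
      linarith
    obtain ⟨r, hrc, hrm, hr0, hr1, hr⟩ :=
      this hg.neg (neg_injective.ne hne) hrange' hdir' (neg_lt_neg hgt)
    refine ⟨r, hrc, hrm, hr0, hr1, fun t ht => ?_⟩
    rw [← abs_neg]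
    convert hr t ht using 2
    simp only [Pi.neg_apply]
    ring
  have hBA : 0 < g q - g p := sub_pos.2 hlt
  obtain ⟨V, hVc, hVm, hVp, hVq, hV⟩ := exists_monotoneOn_abs_sub_le hpq hg hlt.le
    (fun t ht => by simpa [min_eq_left hlt.le] using (hrange t ht).1)
    (fun t ht => by simpa [max_eq_right hlt.le] using (hrange t ht).2)
    (fun a ha b hb hab => (hdir a ha b hb hab).1 hlt)
  refine ⟨fun t => (V t - g p) / (g q - g p), by fun_prop, ?_, by simp [hVp],
    by simp [hVq, hBA.ne'], ?_⟩
  · intro a ha b hb hab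
    exact div_le_div_of_nonneg_right (sub_le_sub_right (hVm ha hb hab) _) hBA.le
  · intro t ht
    rw [div_mul_cancel₀ _ hBA.ne', add_sub_cancel]
    exact hV t ht

theorem MonotoneOn.exists_strictMonoOn_abs_sub_le {r : ℝ → ℝ} {p q θ : ℝ} (hpq : p < q)
    (hθ : 0 < θ) (hθ1 : θ ≤ 1) (hrc : ContinuousOn r (Icc p q)) (hrm : MonotoneOn r (Icc p q))
    (hr0 : r p = 0) (hr1 : r q = 1) :
    ∃ μ : ℝ → ℝ, ContinuousOn μ (Icc p q) ∧ StrictMonoOn μ (Icc p q) ∧ μ p = 0 ∧ μ q = 1 ∧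
      ∀ t ∈ Icc p q, |μ t - r t| ≤ θ := by
  have hqp : 0 < q - p := sub_pos.2 hpq
  have hr : ∀ t ∈ Icc p q, r t ∈ Icc 0 1 := fun t ht =>
    ⟨hr0 ▸ hrm (left_mem_Icc.2 hpq.le) ht ht.1, hr1 ▸ hrm ht (right_mem_Icc.2 hpq.le) ht.2⟩
  have hlin : ∀ t ∈ Icc p q, (t - p) / (q - p) ∈ Icc 0 1 := fun t ht =>
    ⟨div_nonneg (sub_nonneg.2 ht.1) hqp.le, (div_le_one hqp).2 (by linarith [ht.2])⟩
  refine ⟨fun t => (1 - θ) * r t + θ * ((t - p) / (q - p)), by fun_prop, ?_, by simp [hr0],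
    by simp [hr1, hqp.ne'], ?_⟩
  · intro a ha b hb hab
    have h1 := mul_le_mul_of_nonneg_left (hrm ha hb hab.le) (sub_nonneg.2 hθ1)
    have h2 := mul_lt_mul_of_pos_left (div_lt_div_of_pos_right (sub_lt_sub_right hab p) hqp) hθ
    exact add_lt_add_of_le_of_lt h1 h2
  · intro t ht
    obtain ⟨hr₀, hr₁⟩ := hr t ht
    obtain ⟨hl₀, hl₁⟩ := hlin t ht
    rw [show (1 - θ) * r t + θ * ((t - p) / (q - p)) - r t = θ * ((t - p) / (q - p) - r t) by ring,
      abs_mul, abs_of_pos hθ]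
    exact mul_le_of_le_one_right hθ.le (abs_le.2 ⟨by linarith, by linarith⟩)

structure IsMatchingOn (σ τ : ℝ → ℝ) (c a b : ℝ) (f : ℝ → ℝ) : Prop where
  continuousOn : ContinuousOn f (Icc a b)
  strictMonoOn : StrictMonoOn f (Icc a b)
  left : f a = a
  right : f b = b
  abs_sub_le : ∀ t ∈ Icc a b, |σ (f t) - τ t| ≤ c

namespace IsMatchingOn

variable {σ τ f g : ℝ → ℝ} {c a b d : ℝ}

theorem append (hf : IsMatchingOn σ τ c a b f) (hg : IsMatchingOn σ τ c b d g) (hab : a ≤ b)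
    (hbd : b ≤ d) : IsMatchingOn σ τ c a d fun t => if t ≤ b then f t else g t := by
  set h : ℝ → ℝ := fun t => if t ≤ b then f t else g t
  have hleft : EqOn f h (Icc a b) := fun t ht => (if_pos ht.2).symm
  have hright : EqOn g h (Icc b d) := by
    intro t ht
    rcases ht.1.eq_or_lt with rfl | hbt
    · exact hg.left.trans (hf.right.symm.trans (hleft (right_mem_Icc.2 hab)))
    · exact (if_neg hbt.not_ge).symm
  have hunion := Icc_union_Icc_eq_Icc hab hbd
  refine ⟨?_, ?_, (hleft (left_mem_Icc.2 hab)).symm.trans hf.left, ?_, ?_⟩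
  · rw [← hunion]
    exact (hf.continuousOn.congr hleft.symm).union_of_isClosed
      (hg.continuousOn.congr hright.symm) isClosed_Icc isClosed_Icc
  · rw [← hunion]
    exact (hf.strictMonoOn.congr hleft).union (hg.strictMonoOn.congr hright) (isGreatest_Icc hab)
      (isLeast_Icc hbd)
  · exact (hright (right_mem_Icc.2 hbd)).symm.trans hg.right
  · rw [← hunion]
    rintro t (ht | ht)
    · rw [← hleft ht]; exact hf.abs_sub_le t ht
    · rw [← hright ht]; exact hg.abs_sub_le t ht

theorem frechetDist_le (hf : IsMatchingOn σ τ c 0 1 f) : frechetDist σ τ ≤ c := by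
  have : Nonempty (Icc (0 : ℝ) 1) := ⟨⟨0, left_mem_Icc.2 zero_le_one⟩⟩
  refine ciInf_le_of_le ⟨0, ?_⟩ ⟨f, hf.continuousOn, hf.strictMonoOn, hf.left, hf.right⟩
    (ciSup_le fun t => hf.abs_sub_le t t.2)
  rintro _ ⟨g, rfl⟩
  exact Real.iSup_nonneg fun t => abs_nonneg _

end IsMatchingOn

theorem exists_isMatchingOn_of_forall_lt {σ τ : ℝ → ℝ} {s : ℕ → ℝ} {c : ℝ} {n : ℕ} (hn : 1 ≤ n)
    (hs : MonotoneOn s (Iic n)) (h : ∀ i < n, ∃ f, IsMatchingOn σ τ c (s i) (s (i + 1)) f) :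
    ∃ f, IsMatchingOn σ τ c (s 0) (s n) f := by
  induction n, hn using Nat.le_induction with
  | base => exact h 0 one_pos
  | succ n hn ih =>
    obtain ⟨f, hf⟩ :=
      ih (hs.mono (Iic_subset_Iic.2 n.le_succ)) fun i hi => h i (hi.trans n.lt_succ_self)
    obtain ⟨g, hg⟩ := h n n.lt_succ_self
    exact ⟨_, hf.append hg (hs (by simp) (by simp) n.zero_le) (hs (by simp) (by simp) n.le_succ)⟩

theorem exists_isMatchingOn_of_monotone_param {σ g r : ℝ → ℝ} {p q c ε : ℝ} (hpq : p < q)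
    (hε : 0 < ε)
    (hσ : ∀ u ∈ Icc p q, σ u = g p + (u - p) / (q - p) * (g q - g p))
    (hrc : ContinuousOn r (Icc p q)) (hrm : MonotoneOn r (Icc p q)) (hr0 : r p = 0) (hr1 : r q = 1)
    (hr : ∀ t ∈ Icc p q, |g p + r t * (g q - g p) - g t| ≤ c) :
    ∃ f, IsMatchingOn σ g (c + ε) p q f := by
  have hqp : 0 < q - p := sub_pos.2 hpq
  set D := |g q - g p|
  have hD : 0 ≤ D := abs_nonneg _
  -- Any `θ ∈ (0, 1]` with `θ * D ≤ ε` would do.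
  obtain ⟨μ, hμc, hμm, hμ0, hμ1, hμr⟩ := hrm.exists_strictMonoOn_abs_sub_le hpq
    (θ := ε / (ε + D)) (by positivity) ((div_le_one (by positivity)).2 (by linarith)) hrc hr0 hr1
  have hμ : ∀ t ∈ Icc p q, μ t ∈ Icc 0 1 := fun t ht =>
    ⟨hμ0 ▸ hμm.monotoneOn (left_mem_Icc.2 hpq.le) ht ht.1,
      hμ1 ▸ hμm.monotoneOn ht (right_mem_Icc.2 hpq.le) ht.2⟩
  refine ⟨fun t => p + μ t * (q - p), ⟨by fun_prop, ?_, by simp [hμ0], by simp [hμ1], ?_⟩⟩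
  · intro a ha b hb hab
    simpa using mul_lt_mul_of_pos_right (hμm ha hb hab) hqp
  · intro t ht
    have hft : p + μ t * (q - p) ∈ Icc p q := by
      obtain ⟨hμt₀, hμt₁⟩ := hμ t ht
      constructor <;> nlinarith
    have hσf : σ (p + μ t * (q - p)) = g p + μ t * (g q - g p) := by
      rw [hσ _ hft, add_sub_cancel_left, mul_div_cancel_right₀ _ hqp.ne']
    have hθD : ε / (ε + D) * D ≤ ε := by
      rw [div_mul_eq_mul_div, div_le_iff₀ (by positivity)]
      nlinarith
    calc |σ (p + μ t * (q - p)) - g t|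
        = |(μ t - r t) * (g q - g p) + (g p + r t * (g q - g p) - g t)| := by rw [hσf]; ring_nf
      _ ≤ |μ t - r t| * D + c := by
        rw [← abs_mul]; exact (abs_add_le _ _).trans (add_le_add le_rfl (hr t ht))
      _ ≤ ε / (ε + D) * D + c := by gcongr; exact hμr t ht
      _ ≤ c + ε := by linarith

theorem uIcc_union_Icc_union_Icc_subset_Icc {x y δ : ℝ} (hδ : 0 ≤ δ) :
    uIcc x y ∪ Icc (x - δ) (x + δ) ∪ Icc (y - δ) (y + δ) ⊆
      Icc (min x y - δ) (max x y + δ) := by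
  rintro z ((⟨hz₁, hz₂⟩ | ⟨hz₁, hz₂⟩) | ⟨hz₁, hz₂⟩) <;> constructor <;>
    linarith [min_le_left x y, min_le_right x y, le_max_left x y, le_max_right x y]

namespace IsSignature

variable {δ : ℝ} {τ : ℝ → ℝ} {ℓ i : ℕ} {s : ℕ → ℝ}

theorem strictMonoOn (hsig : IsSignature δ τ ℓ s) : StrictMonoOn s (Iic (ℓ - 1)) :=
  strictMonoOn_Iic_of_lt_succ fun i hi => hsig.2.2.2.1 i (by omega)

theorem mem_Icc (hsig : IsSignature δ τ ℓ s) (hi : i ≤ ℓ - 1) : s i ∈ Icc 0 1 := by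
  have hmono := hsig.strictMonoOn.monotoneOn
  obtain ⟨-, hs0, hs1, -⟩ := hsig
  exact ⟨hs0 ▸ hmono (by simp) hi (Nat.zero_le i), hs1 ▸ hmono hi (by simp) hi⟩

theorem edge_ne (hsig : IsSignature δ τ ℓ s) (hδ : 0 ≤ δ) (hi : i + 1 < ℓ) :
    τ (s i) ≠ τ (s (i + 1)) := by
  obtain ⟨-, -, -, -, -, -, hmid, hfirst, hlast, -⟩ := hsig
  suffices 0 < |τ (s (i + 1)) - τ (s i)| by
    intro h; rw [h, sub_self, abs_zero] at this; exact this.false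
  rcases Nat.eq_zero_or_pos i with rfl | hi0
  · linarith
  by_cases h3 : i + 3 ≤ ℓ
  · linarith [hmid i hi0 h3]
  · rw [show ℓ - 1 = i + 1 by omega, show ℓ - 2 = i by omega] at hlast
    linarith

theorem edge_range (hsig : IsSignature δ τ ℓ s) (hδ : 0 ≤ δ) (hi : i + 1 < ℓ) :
    ∀ t ∈ Icc (s i) (s (i + 1)),
      τ t ∈ Icc (min (τ (s i)) (τ (s (i + 1))) - δ) (max (τ (s i)) (τ (s (i + 1))) + δ) := by
  obtain ⟨-, -, -, -, -, -, -, -, -, hmid, hfirst, hlast, htwo⟩ := hsig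
  intro t ht
  apply uIcc_union_Icc_union_Icc_subset_Icc hδ
  rcases Nat.eq_zero_or_pos i with rfl | hi0
  · rcases (show ℓ = 2 ∨ 2 < ℓ by omega) with hℓ | hℓ
    · exact htwo hℓ t ht
    · exact subset_union_left (hfirst hℓ t ht)
  by_cases h3 : i + 3 ≤ ℓ
  · exact subset_union_left (subset_union_left (hmid i hi0 h3 t ht))
  · rw [show ℓ - 1 = i + 1 by omega, show ℓ - 2 = i by omega] at hlast
    rcases hlast (by omega) t ht with h | h
    · exact subset_union_left (subset_union_left h)
    · exact subset_union_right h

theorem edge_dir (hsig : IsSignature δ τ ℓ s) (hδ : 0 ≤ δ) (hi : i + 1 < ℓ) :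
    ∀ a ∈ Icc (s i) (s (i + 1)), ∀ b ∈ Icc (s i) (s (i + 1)), a ≤ b →
      (τ (s i) < τ (s (i + 1)) → τ a - τ b ≤ 2 * δ) ∧
      (τ (s (i + 1)) < τ (s i) → τ b - τ a ≤ 2 * δ) := by
  intro a ha b hb hab
  rcases hab.eq_or_lt with rfl | hab
  · constructor <;> intro <;> linarith
  · exact hsig.2.2.2.2.2.1 i hi a b ha.1 hab hb.2

theorem exists_isMatchingOn_edge {σ : ℝ → ℝ} {ε : ℝ} (hsig : IsSignature δ τ ℓ s)
    (hδ : 0 ≤ δ) (hτ : ContinuousOn τ (Icc 0 1)) (hσ : IsPolyOn σ ℓ s fun i => τ (s i))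
    (hε : 0 < ε) (hi : i + 1 < ℓ) : ∃ f, IsMatchingOn σ τ (δ + ε) (s i) (s (i + 1)) f := by
  have hlt : s i < s (i + 1) := hsig.2.2.2.1 i hi
  have hτi : ContinuousOn τ (Icc (s i) (s (i + 1))) :=
    hτ.mono (Icc_subset_Icc (hsig.mem_Icc (by omega)).1 (hsig.mem_Icc (by omega)).2)
  obtain ⟨r, hrc, hrm, hr0, hr1, hr⟩ := exists_monotone_param_abs_sub_le hlt.le hτi
    (hsig.edge_ne hδ hi) (hsig.edge_range hδ hi) (hsig.edge_dir hδ hi)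
  exact exists_isMatchingOn_of_monotone_param hlt hε (hσ.2.2.2.2 i hi) hrc hrm hr0 hr1 hr

end IsSignature

/-- Lemma 3.1: for any `δ ≥ 0`, any curve `τ` and any
`δ`-signature `σ` of `τ` (given by parameters `s` and realized as the linear
interpolation of the values `τ (s i)`), it holds that `d_F(σ, τ) ≤ δ`. -/
theorem frechet_dist_signature_le (δ : ℝ) (hδ : 0 ≤ δ) (τ : ℝ → ℝ)
    (hτ : ContinuousOn τ (Set.Icc 0 1))
    (ℓ : ℕ) (s : ℕ → ℝ) (hsig : IsSignature δ τ ℓ s)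
    (σ : ℝ → ℝ) (hσ : IsPolyOn σ ℓ s (fun i => τ (s i))) :
    frechetDist σ τ ≤ δ := by
  obtain ⟨hℓ, hs0, hs1, -⟩ := id hsig
  refine le_of_forall_pos_le_add fun ε hε => ?_
  obtain ⟨f, hf⟩ := exists_isMatchingOn_of_forall_lt (n := ℓ - 1) (by omega)
    hsig.strictMonoOn.monotoneOn fun i hi => hsig.exists_isMatchingOn_edge hδ hτ hσ hε (by omega)
  rw [hs0, hs1] at hf
  exact hf.frechetDist_le
end

section
/- Let σ be a δ-signature of a polygonal curve τ with ℓ vertices. Then every polygonal curve π with d_F(π, τ) ≤ δ has at least ℓ − 2 vertices. -/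
open Set

/-- Monotone lemma for strictly increasing finite sequences. -/
lemma seq_lt {n : ℕ} {a : ℕ → ℝ} (h : ∀ i, i + 1 < n → a i < a (i + 1)) :
    ∀ i j, i < j → j < n → a i < a j := by
  intro i j hij hjn
  induction j with
  | zero => omega
  | succ k ih =>
    rcases Nat.lt_succ_iff_lt_or_eq.mp hij with h1 | h1
    · exact (ih h1 (by omega)).trans (h k (by omega))
    · subst h1; exact h i (by omega)

/-- Every `u ∈ [0,1]` lies in some piece of the polygonal curve. -/
lemma poly_cover {π : ℝ → ℝ} {m : ℕ} {t w : ℕ → ℝ} (hp : IsPolyOn π m t w) :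
    ∀ u ∈ Set.Icc (0:ℝ) 1, ∃ j, j + 1 < m ∧ t j ≤ u ∧ u ≤ t (j + 1) := by
  obtain ⟨hm, ht0, ht1, hts, _⟩ := hp
  intro u hu
  set S : Finset ℕ := (Finset.range (m - 1)).filter (fun j => t j ≤ u) with hS
  have h0S : 0 ∈ S := by
    simp [hS, Finset.mem_filter, ht0, hu.1]; omega
  have hSne : S.Nonempty := ⟨0, h0S⟩
  set j := S.max' hSne with hj
  have hjS : j ∈ S := S.max'_mem hSne
  have hjlt : j < m - 1 := by
    have := (Finset.mem_filter.mp hjS).1; simpa using this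
  have htj : t j ≤ u := (Finset.mem_filter.mp hjS).2
  refine ⟨j, by omega, htj, ?_⟩
  by_cases hcase : j + 1 < m - 1
  · by_contra hlt
    push_neg at hlt
    have : j + 1 ∈ S := by
      simp only [hS, Finset.mem_filter, Finset.mem_range]
      exact ⟨by omega, le_of_lt hlt⟩
    have := S.le_max' _ this
    omega
  · have : j + 1 = m - 1 := by omega
    rw [this, ht1]; exact hu.2

/-- The negation of a polygonal curve is polygonal with negated weights. -/
lemma poly_neg {π : ℝ → ℝ} {m : ℕ} {t w : ℕ → ℝ} (hp : IsPolyOn π m t w) :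
    IsPolyOn (fun u => -(π u)) m t (fun j => -(w j)) := by
  obtain ⟨hm, ht0, ht1, hts, hf⟩ := hp
  refine ⟨hm, ht0, ht1, hts, ?_⟩
  intro i hi u hu
  have := hf i hi u hu
  simp only [this]; ring

/-- Polygonal curves are bounded on `[0,1]`. -/
lemma poly_bdd {π : ℝ → ℝ} {m : ℕ} {t w : ℕ → ℝ} (hp : IsPolyOn π m t w) :
    ∃ M : ℝ, ∀ u ∈ Set.Icc (0:ℝ) 1, |π u| ≤ M := by
  refine ⟨∑ j ∈ Finset.range m, |w j|, ?_⟩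
  intro u hu
  obtain ⟨j, hj, h1, h2⟩ := poly_cover hp u hu
  obtain ⟨hm, ht0, ht1, hts, hf⟩ := hp
  have hL : 0 < t (j + 1) - t j := by have := hts j hj; linarith
  set lam := (u - t j) / (t (j + 1) - t j) with hlam
  have hlam0 : 0 ≤ lam := div_nonneg (by linarith) (le_of_lt hL)
  have hlam1 : lam ≤ 1 := by
    rw [hlam, div_le_one hL]; linarith
  have hval : π u = (1 - lam) * w j + lam * w (j + 1) := by
    rw [hf j hj u ⟨h1, h2⟩]; ring
  have hwj : |w j| ≤ ∑ j ∈ Finset.range m, |w j| :=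
    Finset.single_le_sum (f := fun j => |w j|) (fun _ _ => abs_nonneg _)
      (Finset.mem_range.mpr (by omega))
  have hwj1 : |w (j+1)| ≤ ∑ j ∈ Finset.range m, |w j| :=
    Finset.single_le_sum (f := fun j => |w j|) (fun _ _ => abs_nonneg _)
      (Finset.mem_range.mpr (by omega))
  calc |π u| = |(1 - lam) * w j + lam * w (j + 1)| := by rw [hval]
    _ ≤ (1 - lam) * |w j| + lam * |w (j + 1)| := by
        refine (abs_add_le _ _).trans ?_
        rw [abs_mul, abs_mul, abs_of_nonneg (by linarith : (0:ℝ) ≤ 1 - lam),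
          abs_of_nonneg hlam0]
    _ ≤ (1 - lam) * (∑ j ∈ Finset.range m, |w j|) + lam * (∑ j ∈ Finset.range m, |w j|) := by
        gcongr <;> linarith
    _ = ∑ j ∈ Finset.range m, |w j| := by ring

/-- A strict local max of a polygonal curve forces a vertex at least that high
strictly between the witnesses. -/
lemma turn_max {π : ℝ → ℝ} {m : ℕ} {t w : ℕ → ℝ} (hp : IsPolyOn π m t w)
    {a b c : ℝ} (ha : a ∈ Set.Icc (0:ℝ) 1) (hc : c ∈ Set.Icc (0:ℝ) 1)
    (hab : a < b) (hbc : b < c) (hpa : π a < π b) (hpc : π c < π b) :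
    ∃ k, k < m ∧ a < t k ∧ t k < c ∧ π b ≤ π (t k) := by
  have hb : b ∈ Set.Icc (0:ℝ) 1 := ⟨le_trans ha.1 (le_of_lt hab), le_trans (le_of_lt hbc) hc.2⟩
  obtain ⟨j, hj, h1, h2⟩ := poly_cover hp b hb
  obtain ⟨hm, ht0, ht1, hts, hf⟩ := hp
  have hL : 0 < t (j + 1) - t j := by have := hts j hj; linarith
  set μ := (w (j + 1) - w j) / (t (j + 1) - t j) with hμ
  have key : ∀ x ∈ Set.Icc (t j) (t (j + 1)), π x = w j + (x - t j) * μ := by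
    intro x hx
    rw [hf j hj x hx, hμ, div_mul_eq_mul_div, mul_div_assoc]
  have hπb : π b = w j + (b - t j) * μ := key b ⟨h1, h2⟩
  rcases le_or_gt μ 0 with hμ0 | hμ0
  · -- vertex t j
    refine ⟨j, by omega, ?_, lt_of_le_of_lt h1 hbc, ?_⟩
    · by_contra hle
      push_neg at hle
      have hπa : π a = w j + (a - t j) * μ := key a ⟨hle, le_trans (le_of_lt hab) h2⟩
      nlinarith
    · have hπtj : π (t j) = w j + (t j - t j) * μ := key (t j) ⟨le_refl _, by linarith⟩
      nlinarith
  · -- vertex t (j+1)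
    refine ⟨j + 1, by omega, lt_of_lt_of_le hab h2, ?_, ?_⟩
    · by_contra hle
      push_neg at hle
      have hπc : π c = w j + (c - t j) * μ := key c ⟨le_trans h1 (le_of_lt hbc), hle⟩
      nlinarith
    · have hπt : π (t (j+1)) = w j + (t (j+1) - t j) * μ := key _ ⟨by linarith, le_refl _⟩
      nlinarith

lemma turn_min {π : ℝ → ℝ} {m : ℕ} {t w : ℕ → ℝ} (hp : IsPolyOn π m t w)
    {a b c : ℝ} (ha : a ∈ Set.Icc (0:ℝ) 1) (hc : c ∈ Set.Icc (0:ℝ) 1)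
    (hab : a < b) (hbc : b < c) (hpa : π b < π a) (hpc : π b < π c) :
    ∃ k, k < m ∧ a < t k ∧ t k < c ∧ π (t k) ≤ π b := by
  obtain ⟨k, hk, h1, h2, h3⟩ := turn_max (poly_neg hp) ha hc hab hbc
    (by simpa using hpa) (by simpa using hpc)
  exact ⟨k, hk, h1, h2, by simpa using h3⟩

/-- Corollary 3.1: if `τ` has a `δ`-signature with `ℓ` vertices,
then every polygonal curve `π` with `d_F(π, τ) ≤ δ` has at least `ℓ - 2`
vertices. -/
theorem signature_complexity_lower_bound (δ : ℝ) (hδ : 0 ≤ δ)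
    (τ : ℝ → ℝ) (m : ℕ) (t w : ℕ → ℝ) (hτ : IsPolyOn τ m t w)
    (ℓ : ℕ) (s : ℕ → ℝ) (hsig : IsSignature δ τ ℓ s)
    (hvert : ∀ i, i < ℓ → ∃ j, j < m ∧ s i = t j)
    (π : ℝ → ℝ) (m' : ℕ) (t' w' : ℕ → ℝ) (hπ : IsPolyOn π m' t' w')
    (hd : frechetDist π τ ≤ δ) :
    ℓ - 2 ≤ m' := by
  have hm'2 : 2 ≤ m' := hπ.1
  by_cases hℓ4 : ℓ ≤ 4
  · omega
  push_neg at hℓ4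
  have hℓ5 : 5 ≤ ℓ := hℓ4
  obtain ⟨hℓ2, hs0, hs1, hss, hnd, hdir, hgap, -, -, -, -, -, -⟩ := hsig
  have ht'0 : t' 0 = 0 := hπ.2.1
  have ht'1 : t' (m' - 1) = 1 := hπ.2.2.1
  -- the minimum gap excess
  have hIne : (Finset.Icc 1 (ℓ - 3)).Nonempty := ⟨1, by simp [Finset.mem_Icc]; omega⟩
  set G := (Finset.Icc 1 (ℓ - 3)).inf' hIne (fun i => |τ (s (i + 1)) - τ (s i)| - 2 * δ)
    with hGdef
  have hGpos : 0 < G := by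
    rw [hGdef, Finset.lt_inf'_iff]
    intro i hi
    rw [Finset.mem_Icc] at hi
    have := hgap i hi.1 (by omega)
    linarith
  have hGle : ∀ i, 1 ≤ i → i + 3 ≤ ℓ → 2 * δ + G ≤ |τ (s (i + 1)) - τ (s i)| := by
    intro i h1 h2
    have : G ≤ |τ (s (i + 1)) - τ (s i)| - 2 * δ := by
      rw [hGdef]
      exact Finset.inf'_le _ (by rw [Finset.mem_Icc]; omega)
    linarith
  -- extract a near-optimal reparametrization
  haveI : Nonempty {f : ℝ → ℝ // IsReparam f} :=
    ⟨⟨id, continuousOn_id, strictMonoOn_id, rfl, rfl⟩⟩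
  have hd' : frechetDist π τ < δ + G / 3 := lt_of_le_of_lt hd (by linarith)
  obtain ⟨⟨f, hfc, hfm, hf0, hf1⟩, hflt⟩ :=
    exists_lt_of_ciInf_lt (α := ℝ) (f := fun f : {f : ℝ → ℝ // IsReparam f} =>
      ⨆ t : Set.Icc (0:ℝ) 1, |π (f.1 ↑t) - τ ↑t|) hd'
  have h01 : (0:ℝ) ∈ Set.Icc (0:ℝ) 1 := by norm_num
  have h11 : (1:ℝ) ∈ Set.Icc (0:ℝ) 1 := by norm_num
  have himg : ∀ x ∈ Set.Icc (0:ℝ) 1, f x ∈ Set.Icc (0:ℝ) 1 := by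
    intro x hx
    constructor
    · rw [← hf0]; exact hfm.monotoneOn h01 hx hx.1
    · rw [← hf1]; exact hfm.monotoneOn hx h11 hx.2
  obtain ⟨Mπ, hMπ⟩ := poly_bdd hπ
  obtain ⟨Mτ, hMτ⟩ := poly_bdd hτ
  have hbdd : BddAbove (Set.range fun t : Set.Icc (0:ℝ) 1 =>
      |π (f ↑t) - τ ↑t|) := by
    refine ⟨Mπ + Mτ, ?_⟩
    rintro y ⟨t0, rfl⟩
    have h1 : |π (f ↑t0)| ≤ Mπ := hMπ _ (himg _ t0.2)
    have h2 : |τ ↑t0| ≤ Mτ := hMτ _ t0.2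
    calc |π (f ↑t0) - τ ↑t0| ≤ |π (f ↑t0)| + |τ ↑t0| := abs_sub _ _
      _ ≤ Mπ + Mτ := by linarith
  have hsmono : ∀ i j, i < j → j < ℓ → s i < s j := seq_lt hss
  have hsmem : ∀ i, i < ℓ → s i ∈ Set.Icc (0:ℝ) 1 := by
    intro i hi
    constructor
    · rcases Nat.eq_zero_or_pos i with h | h
      · subst h; rw [hs0]
      · rw [← hs0]; exact le_of_lt (hsmono 0 i h hi)
    · rcases Nat.lt_or_ge i (ℓ - 1) with h | h
      · rw [← hs1]; exact le_of_lt (hsmono i (ℓ - 1) h (by omega))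
      · have : i = ℓ - 1 := by omega
        rw [this, hs1]
  have herr : ∀ i, i < ℓ → |π (f (s i)) - τ (s i)| < δ + G / 3 := by
    intro i hi
    exact lt_of_le_of_lt (le_ciSup hbdd ⟨s i, hsmem i hi⟩) hflt
  -- the points u i = f (s i)
  set u : ℕ → ℝ := fun i => f (s i) with hudef
  have humono : ∀ i j, i < j → j < ℓ → u i < u j := by
    intro i j hij hj
    exact hfm (hsmem i (by omega)) (hsmem j hj) (hsmono i j hij hj)
  have hu0 : u 0 = 0 := by simp only [hudef]; rw [hs0, hf0]
  have huL : u (ℓ - 1) = 1 := by simp only [hudef]; rw [hs1, hf1]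
  have humem : ∀ i, i < ℓ → u i ∈ Set.Icc (0:ℝ) 1 := fun i hi => himg _ (hsmem i hi)
  -- steps of π at the u i follow the signature direction
  set D : ℕ → ℝ := fun i => τ (s (i + 1)) - τ (s i) with hDdef
  have hstep : ∀ i, 1 ≤ i → i + 3 ≤ ℓ →
      (0 < D i → π (u i) < π (u (i + 1))) ∧ (D i < 0 → π (u (i + 1)) < π (u i)) := by
    intro i h1 h2
    have e1 := abs_lt.mp (herr i (by omega))
    have e2 := abs_lt.mp (herr (i + 1) (by omega))
    have hb := hGle i h1 h2
    simp only [hudef, hDdef]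
    rcases abs_cases (τ (s (i + 1)) - τ (s i)) with ⟨hc, -⟩ | ⟨hc, -⟩ <;>
      rw [hc] at hb <;> constructor <;> intro hD <;> linarith
  -- consecutive interior steps alternate in direction
  have hDne : ∀ i, 1 ≤ i → i + 3 ≤ ℓ → D i ≠ 0 := by
    intro i h1 h2 h0
    have := hGle i h1 h2
    simp only [hDdef] at h0
    rw [h0] at this
    simp at this
    linarith
  have halt : ∀ i, 1 ≤ i → i + 4 ≤ ℓ →
      (0 < D i ∧ D (i + 1) < 0) ∨ (D i < 0 ∧ 0 < D (i + 1)) := by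
    intro i h1 h2
    have hnd' := hnd (i + 1) (by omega) (by omega)
    rw [Set.mem_uIcc] at hnd'
    push_neg at hnd'
    have hidx : i + 1 - 1 = i := by omega
    rw [hidx] at hnd'
    obtain ⟨hA, hB⟩ := hnd'
    have hne1 : D i ≠ 0 := hDne i h1 (by omega)
    have hne2 : D (i + 1) ≠ 0 := hDne (i + 1) (by omega) (by omega)
    simp only [hDdef] at hne1 hne2 ⊢
    rcases lt_or_gt_of_ne (sub_ne_zero.mp hne1) with h | h
    · -- τ (s (i+1)) < τ (s i)
      right
      refine ⟨by linarith, ?_⟩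
      rcases lt_or_gt_of_ne (sub_ne_zero.mp hne2) with h' | h'
      · exfalso
        have := hB (le_of_lt h')
        linarith
      · linarith
    · left
      refine ⟨by linarith, ?_⟩
      rcases lt_or_gt_of_ne (sub_ne_zero.mp hne2) with h' | h'
      · linarith
      · exfalso
        have := hA (le_of_lt h)
        linarith
  -- each turn yields a vertex of π
  have hturn : ∀ i, ∃ k, 1 ≤ i → i + 4 ≤ ℓ →
      k < m' ∧ u i < t' k ∧ t' k < u (i + 2) ∧
      ((0 < D i ∧ π (u (i + 1)) ≤ π (t' k)) ∨ (D i < 0 ∧ π (t' k) ≤ π (u (i + 1)))) := by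
    intro i
    by_cases hcond : 1 ≤ i ∧ i + 4 ≤ ℓ
    · obtain ⟨h1, h2⟩ := hcond
      have hab : u i < u (i + 1) := humono i (i + 1) (by omega) (by omega)
      have hbc : u (i + 1) < u (i + 2) := humono (i + 1) (i + 2) (by omega) (by omega)
      have ha := humem i (by omega)
      have hc := humem (i + 2) (by omega)
      rcases halt i h1 h2 with ⟨hD1, hD2⟩ | ⟨hD1, hD2⟩
      · have hpa : π (u i) < π (u (i + 1)) := (hstep i h1 (by omega)).1 hD1
        have hpc : π (u (i + 2)) < π (u (i + 1)) := (hstep (i + 1) (by omega) (by omega)).2 hD2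
        obtain ⟨k, hk1, hk2, hk3, hk4⟩ := turn_max hπ ha hc hab hbc hpa hpc
        exact ⟨k, fun _ _ => ⟨hk1, hk2, hk3, Or.inl ⟨hD1, hk4⟩⟩⟩
      · have hpa : π (u (i + 1)) < π (u i) := (hstep i h1 (by omega)).2 hD1
        have hpc : π (u (i + 1)) < π (u (i + 2)) := (hstep (i + 1) (by omega) (by omega)).1 hD2
        obtain ⟨k, hk1, hk2, hk3, hk4⟩ := turn_min hπ ha hc hab hbc hpa hpc
        exact ⟨k, fun _ _ => ⟨hk1, hk2, hk3, Or.inr ⟨hD1, hk4⟩⟩⟩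
    · exact ⟨0, fun h1 h2 => absurd ⟨h1, h2⟩ hcond⟩
  choose k hk using hturn
  -- basic facts about the chosen vertices
  have hkfact : ∀ i ∈ Finset.Icc 1 (ℓ - 4), k i < m' ∧ u i < t' (k i) ∧ t' (k i) < u (i + 2) ∧
      ((0 < D i ∧ π (u (i + 1)) ≤ π (t' (k i))) ∨ (D i < 0 ∧ π (t' (k i)) ≤ π (u (i + 1)))) := by
    intro i hi
    rw [Finset.mem_Icc] at hi
    exact hk i hi.1 (by omega)
  have hupos : ∀ i, 1 ≤ i → i < ℓ → 0 < u i := by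
    intro i h1 h2
    rw [← hu0]; exact humono 0 i h1 h2
  have hult : ∀ i, i < ℓ - 1 → u i < 1 := by
    intro i h
    rw [← huL]; exact humono i (ℓ - 1) h (by omega)
  -- the map k sends turns injectively into interior vertex indices
  have hmaps : ∀ i ∈ Finset.Icc 1 (ℓ - 4), k i ∈ Finset.Ioo 0 (m' - 1) := by
    intro i hi
    obtain ⟨hk1, hk2, hk3, -⟩ := hkfact i hi
    rw [Finset.mem_Icc] at hi
    rw [Finset.mem_Ioo]
    have hne0 : k i ≠ 0 := by
      intro h
      rw [h, ht'0] at hk2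
      exact absurd hk2 (not_lt.mpr (le_of_lt (hupos i hi.1 (by omega))))
    have hneL : k i ≠ m' - 1 := by
      intro h
      rw [h, ht'1] at hk3
      exact absurd hk3 (not_lt.mpr (le_of_lt (hult (i + 2) (by omega))))
    omega
  have hinj : ∀ i ∈ Finset.Icc 1 (ℓ - 4), ∀ i' ∈ Finset.Icc 1 (ℓ - 4),
      i < i' → k i ≠ k i' := by
    intro i hi i' hi' hlt
    obtain ⟨-, hk2, hk3, hk4⟩ := hkfact i hi
    obtain ⟨-, hk2', hk3', hk4'⟩ := hkfact i' hi'
    rw [Finset.mem_Icc] at hi hi'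
    by_cases hadj : i' = i + 1
    · -- adjacent turns: opposite extremum types
      subst hadj
      have hstep2 := hstep (i + 1) (by omega) (by omega)
      intro heq
      rw [heq] at hk4
      rcases hk4 with ⟨hD1, hv1⟩ | ⟨hD1, hv1⟩
      · rcases hk4' with ⟨hD2, hv2⟩ | ⟨hD2, hv2⟩
        · -- D i > 0 and D (i+1) > 0 contradicts alternation
          rcases halt i hi.1 (by omega) with ⟨-, h⟩ | ⟨h, -⟩ <;> linarith
        · have := hstep2.2 hD2
          linarith
      · rcases hk4' with ⟨hD2, hv2⟩ | ⟨hD2, hv2⟩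
        · have := hstep2.1 hD2
          linarith
        · rcases halt i hi.1 (by omega) with ⟨h, -⟩ | ⟨-, h⟩ <;> linarith
    · -- far apart turns: disjoint parameter intervals
      have h2 : i + 2 ≤ i' := by omega
      have : u (i + 2) ≤ u i' := by
        rcases Nat.eq_or_lt_of_le h2 with h | h
        · rw [h]
        · exact le_of_lt (humono (i + 2) i' h (by omega))
      intro heq
      rw [heq] at hk3
      linarith
  have hcard := Finset.card_le_card_of_injOn k hmaps (by
    intro x hx y hy hxy
    by_contra hne
    rcases Nat.lt_or_ge x y with h | h
    · exact hinj x (by simpa using hx) y (by simpa using hy) h hxy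
    · have h' : y < x := by omega
      exact hinj y (by simpa using hy) x (by simpa using hx) h' hxy.symm)
  rw [Nat.card_Icc, Nat.card_Ioo] at hcard
  omega
end

section
/- Let 0 < λ < 1, let P be a finite set of polygonal curves with vertices in general position, let ℓ ∈ ℕ, and let c ∈ Δ_ℓ be an optimal (1,ℓ)-median of P, i.e., cost₁(P, c) = opt^{(1)}_{1,ℓ}(P). Then for a uniform sample multiset S from P of size at least ⌈5 ln(1/λ)⌉ + 1, Pr[ 12 · opt^{(1)}_{1,ℓ}(S) ≥ min_{τ ∈ P} d_F(τ, c) ] ≥ 1 − λ. -/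
open Set

/-- The `1`-median cost of a center `c` w.r.t. the curves `τ 0, …, τ (n-1)`. -/
noncomputable def cost1 (n : ℕ) (τ : ℕ → ℝ → ℝ) (c : ℝ → ℝ) : ℝ :=
  ∑ i ∈ Finset.range n, frechetDist (τ i) c

/-- The optimal `(1,ℓ)`-median cost of the curves `τ 0, …, τ (n-1)`. -/
noncomputable def opt1 (n : ℕ) (τ : ℕ → ℝ → ℝ) (ℓ : ℕ) : ℝ :=
  sInf {d : ℝ | ∃ c : ℝ → ℝ, InDeltaL ℓ c ∧ d = cost1 n τ c}

/-!
Let `Δ` be the distance from `c` to the nearest input curve. If a sample `S` has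
`12 · opt(S) < Δ`, some `c' ∈ Δ_ℓ` is within `Δ / 12` of every sampled curve, so all of `S` lies
in the `Δ / 6`-ball around its first curve, and that ball lies in the `Δ / 4`-ball around `c'`.
Since `c` is optimal, `cost(P, c) ≤ cost(P, c')`, and the triangle inequality then allows at
most `8 / 11` of the input curves to be `Δ / 4`-close to `c'`. So the bad samples are among the
at most `n · (8n / 11) ^ (s - 1) ≤ λ n ^ s` sequences whose entries all lie in a small ball
around the first entry.
-/

open Bornology

namespace IsReparam

variable {f g : ℝ → ℝ}

lemma id : IsReparam id :=
  ⟨continuousOn_id, fun _ _ _ _ h => h, rfl, rfl⟩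

lemma mapsTo_s13 (hf : IsReparam f) : MapsTo f (Icc 0 1) (Icc 0 1) := fun _ hx =>
  ⟨hf.2.2.1 ▸ hf.2.1.monotoneOn (left_mem_Icc.2 zero_le_one) hx hx.1,
    hf.2.2.2 ▸ hf.2.1.monotoneOn hx (right_mem_Icc.2 zero_le_one) hx.2⟩

lemma comp (hf : IsReparam f) (hg : IsReparam g) : IsReparam (f ∘ g) :=
  ⟨hf.1.comp hg.1 hg.mapsTo_s13, hf.2.1.comp hg.2.1 hg.mapsTo_s13,
    by simp [hg.2.2.1, hf.2.2.1], by simp [hg.2.2.2, hf.2.2.2]⟩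

lemma surjOn (hf : IsReparam f) : SurjOn f (Icc 0 1) (Icc 0 1) := by
  have := intermediate_value_Icc zero_le_one hf.1
  rwa [hf.2.2.1, hf.2.2.2] at this

lemma exists_rightInverse (hf : IsReparam f) :
    ∃ g, IsReparam g ∧ MapsTo g (Icc 0 1) (Icc 0 1) ∧ ∀ t ∈ Icc (0:ℝ) 1, f (g t) = t := by
  set e : Icc (0:ℝ) 1 ≃o Icc (0:ℝ) 1 :=
    StrictMono.orderIsoOfSurjective (hf.mapsTo_s13.restrict f _ _)
      (fun _ _ h => hf.2.1 (Subtype.prop _) (Subtype.prop _) h)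
      (hf.mapsTo_s13.restrict_surjective_iff.2 hf.surjOn)
  refine ⟨fun t => e.symm (projIcc 0 1 zero_le_one t), ⟨?_, ?_, ?_, ?_⟩, fun t _ => (e.symm _).2,
    fun t ht => ?_⟩
  · exact (continuous_subtype_val.comp (e.symm.continuous.comp continuous_projIcc)).continuousOn
  · exact e.symm.strictMono.comp_strictMonoOn (strictMonoOn_projIcc zero_le_one)
  · simp only [projIcc_left]
    exact congrArg Subtype.val (e.symm.map_bot)
  · simp only [projIcc_right]
    exact congrArg Subtype.val (e.symm.map_top)
  · simp only [projIcc_of_mem _ ht]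
    exact congrArg Subtype.val (e.apply_symm_apply ⟨t, ht⟩)

end IsReparam

instance : Nonempty {f : ℝ → ℝ // IsReparam f} := ⟨⟨id, IsReparam.id⟩⟩

section FrechetDist

variable {τ ρ π f : ℝ → ℝ}

lemma frechetDist_nonneg (τ π : ℝ → ℝ) : 0 ≤ frechetDist τ π :=
  Real.iInf_nonneg fun _ => Real.iSup_nonneg fun _ => abs_nonneg _

lemma abs_sub_le_iSup (hτ : IsBounded (τ '' Icc 0 1)) (hπ : IsBounded (π '' Icc 0 1))
    (hf : IsReparam f) {t : ℝ} (ht : t ∈ Icc (0:ℝ) 1) :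
    |τ (f t) - π t| ≤ ⨆ t : Icc (0:ℝ) 1, |τ (f t) - π t| := by
  obtain ⟨C, hC⟩ := isBounded_iff_forall_norm_le.1 hτ
  obtain ⟨D, hD⟩ := isBounded_iff_forall_norm_le.1 hπ
  refine le_ciSup (f := fun t : Icc (0:ℝ) 1 => |τ (f t) - π t|) ⟨C + D, ?_⟩ ⟨t, ht⟩
  rintro _ ⟨u, rfl⟩
  exact (abs_sub _ _).trans (add_le_add (hC _ (mem_image_of_mem τ (hf.mapsTo_s13 u.2)))
    (hD _ (mem_image_of_mem π u.2)))

lemma frechetDist_le_of_forall (hf : IsReparam f) {C : ℝ}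
    (h : ∀ t ∈ Icc (0:ℝ) 1, |τ (f t) - π t| ≤ C) : frechetDist τ π ≤ C :=
  (ciInf_le ⟨0, by rintro _ ⟨g, rfl⟩; exact Real.iSup_nonneg fun _ => abs_nonneg _⟩
    (⟨f, hf⟩ : {f // IsReparam f})).trans (ciSup_le fun t => h t t.2)

lemma frechetDist_le_swap (hτ : IsBounded (τ '' Icc 0 1)) (hπ : IsBounded (π '' Icc 0 1)) :
    frechetDist π τ ≤ frechetDist τ π :=
  le_ciInf fun ⟨f, hf⟩ => by
    obtain ⟨g, hg, hgI, hfg⟩ := hf.exists_rightInverse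
    refine frechetDist_le_of_forall hg fun t ht => ?_
    calc |π (g t) - τ t| = |τ (f (g t)) - π (g t)| := by rw [hfg t ht, abs_sub_comm]
      _ ≤ _ := abs_sub_le_iSup hτ hπ hf (hgI ht)

lemma frechetDist_comm (hτ : IsBounded (τ '' Icc 0 1)) (hπ : IsBounded (π '' Icc 0 1)) :
    frechetDist τ π = frechetDist π τ :=
  (frechetDist_le_swap hπ hτ).antisymm (frechetDist_le_swap hτ hπ)

lemma frechetDist_triangle (hτ : IsBounded (τ '' Icc 0 1)) (hρ : IsBounded (ρ '' Icc 0 1))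
    (hπ : IsBounded (π '' Icc 0 1)) :
    frechetDist τ π ≤ frechetDist τ ρ + frechetDist ρ π := by
  refine le_of_forall_pos_le_add fun ε hε => ?_
  obtain ⟨⟨f, hf⟩, hfε⟩ :=
    exists_lt_of_ciInf_lt (lt_add_of_pos_right (frechetDist τ ρ) (half_pos hε))
  obtain ⟨⟨g, hg⟩, hgε⟩ :=
    exists_lt_of_ciInf_lt (lt_add_of_pos_right (frechetDist ρ π) (half_pos hε))
  refine frechetDist_le_of_forall (hf.comp hg) fun t ht => ?_
  calc |τ (f (g t)) - π t| ≤ |τ (f (g t)) - ρ (g t)| + |ρ (g t) - π t| := abs_sub_le _ _ _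
    _ ≤ (frechetDist τ ρ + ε / 2) + (frechetDist ρ π + ε / 2) :=
        add_le_add ((abs_sub_le_iSup hτ hρ hf (hg.mapsTo_s13 ht)).trans hfε.le)
          ((abs_sub_le_iSup hρ hπ hg ht).trans hgε.le)
    _ = _ := by ring

end FrechetDist

namespace IsPolyOn

variable {τ : ℝ → ℝ} {m : ℕ} {t w : ℕ → ℝ}

lemma exists_mem_Icc (h : IsPolyOn τ m t w) {u : ℝ} (hu : u ∈ Icc (0:ℝ) 1) :
    ∃ i, i + 1 < m ∧ u ∈ Icc (t i) (t (i + 1)) := by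
  obtain ⟨hm, ht0, ht1, -⟩ := h
  let P := fun i => t i ≤ u
  have hle : Nat.findGreatest P (m - 2) ≤ m - 2 := Nat.findGreatest_le _
  refine ⟨Nat.findGreatest P (m - 2), by omega,
    Nat.findGreatest_spec (P := P) (Nat.zero_le _) (show t 0 ≤ u by rw [ht0]; exact hu.1), ?_⟩
  rcases hle.lt_or_eq with hi | hi
  · exact (not_le.1 (Nat.findGreatest_is_greatest (P := P) (Nat.lt_succ_self _) hi)).le
  · rw [hi, show m - 2 + 1 = m - 1 by omega, ht1]
    exact hu.2

lemma abs_le (h : IsPolyOn τ m t w) {u : ℝ} (hu : u ∈ Icc (0:ℝ) 1) :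
    |τ u| ≤ ∑ j ∈ Finset.range m, |w j| := by
  obtain ⟨i, hi, hui⟩ := h.exists_mem_Icc hu
  have hlen : 0 < t (i + 1) - t i := sub_pos.2 (h.2.2.2.1 i hi)
  have hτu := h.2.2.2.2 i hi u hui
  set r := (u - t i) / (t (i + 1) - t i)
  have hr0 : 0 ≤ r := div_nonneg (sub_nonneg.2 hui.1) hlen.le
  have hr1 : r ≤ 1 := (div_le_one hlen).2 (sub_le_sub_right hui.2 _)
  calc |τ u| = |(1 - r) * w i + r * w (i + 1)| := by rw [hτu]; congr 1; ring
    _ ≤ (1 - r) * |w i| + r * |w (i + 1)| := by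
        refine (abs_add_le _ _).trans_eq ?_
        rw [abs_mul, abs_mul, abs_of_nonneg (sub_nonneg.2 hr1), abs_of_nonneg hr0]
    _ ≤ |w i| + |w (i + 1)| := by nlinarith [abs_nonneg (w i), abs_nonneg (w (i + 1))]
    _ ≤ ∑ j ∈ Finset.range m, |w j| :=
        Finset.add_le_sum (fun j _ => abs_nonneg (w j)) (Finset.mem_range.2 (by omega))
          (Finset.mem_range.2 hi) (by omega)

lemma isBounded_image (h : IsPolyOn τ m t w) : IsBounded (τ '' Icc 0 1) :=
  isBounded_iff_forall_norm_le.2 ⟨_, by rintro _ ⟨u, hu, rfl⟩; exact h.abs_le hu⟩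

end IsPolyOn

lemma InDeltaL.isBounded_image {ℓ : ℕ} {c : ℝ → ℝ} (h : InDeltaL ℓ c) :
    IsBounded (c '' Icc 0 1) :=
  let ⟨_, _, _, _, hc⟩ := h
  hc.isBounded_image

section Counting

open Finset

lemma card_filter_le_of_sum_le_sum {ι : Type*} [Fintype ι] {a b : ι → ℝ} {Δ D : ℝ}
    (hΔ : 0 < Δ) (ha : ∀ i, Δ ≤ a i) (hb : ∀ i, b i ≤ a i + D) (hD : ∀ i, D ≤ a i + b i)
    (hsum : ∑ i, a i ≤ ∑ i, b i) :
    (#{i | b i ≤ Δ / 4} : ℝ) ≤ 8 / 11 * Fintype.card ι := by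
  set G := univ.filter fun i => b i ≤ Δ / 4
  set H := univ.filter fun i => ¬ b i ≤ Δ / 4
  have hcard : (#G : ℝ) + #H = Fintype.card ι := by
    exact_mod_cast card_filter_add_card_filter_not (s := univ) _
  have hsplit : ∑ i ∈ G, a i + ∑ i ∈ H, a i ≤ ∑ i ∈ G, b i + ∑ i ∈ H, b i := by
    rwa [sum_filter_add_sum_filter_not, sum_filter_add_sum_filter_not]
  have hGb : ∑ i ∈ G, b i ≤ #G * (Δ / 4) := by
    simpa using sum_le_card_nsmul G b _ fun i hi => (mem_filter.1 hi).2
  have hHb : ∑ i ∈ H, b i ≤ ∑ i ∈ H, a i + #H * D := by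
    simpa [sum_add_distrib] using sum_le_sum fun i (_ : i ∈ H) => hb i
  have hGΔ : #G * Δ ≤ ∑ i ∈ G, a i := by
    simpa using card_nsmul_le_sum G a _ fun i _ => ha i
  have hGD : #G * (D - Δ / 4) ≤ ∑ i ∈ G, a i := by
    simpa using card_nsmul_le_sum G a _ fun i hi => by linarith [hD i, (mem_filter.1 hi).2]
  have hG : (0 : ℝ) ≤ #G := Nat.cast_nonneg _
  have hH : (0 : ℝ) ≤ #H := Nat.cast_nonneg _
  -- `#G · max Δ (D - Δ / 4) ≤ #G · Δ / 4 + #H · D` forces `11 · #G ≤ 8 · (#G + #H)`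
  rcases le_or_gt D (2 * Δ) with hD2 | hD2
  · nlinarith [mul_le_mul_of_nonneg_left hD2 hH]
  · nlinarith [mul_le_mul_of_nonneg_left hD2.le hG]

lemma card_le_of_forall_mem_of_card_le {α : Type*} [Fintype α] [DecidableEq α] {s : ℕ}
    (B : α → Finset α) (Q : Finset (Fin (s + 1) → α)) {r : ℝ} (hr : 0 ≤ r)
    (hQ : ∀ ι ∈ Q, (∀ k, ι k ∈ B (ι 0)) ∧ (#(B (ι 0)) : ℝ) ≤ r) :
    (#Q : ℝ) ≤ Fintype.card α * r ^ s := by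
  set J := univ.filter fun j => (#(B j) : ℝ) ≤ r
  have hQJ : Q ⊆ J.biUnion fun j => Fintype.piFinset (Fin.cons {j} fun _ => B j) := by
    intro ι hι
    obtain ⟨hmem, hcard⟩ := hQ ι hι
    refine mem_biUnion.2 ⟨ι 0, mem_filter.2 ⟨mem_univ _, hcard⟩, Fintype.mem_piFinset.2 ?_⟩
    exact Fin.cases (by simp) fun k => by simpa using hmem k.succ
  have hpi : ∀ j, #(Fintype.piFinset (Fin.cons {j} fun _ => B j : Fin (s + 1) → Finset α)) =
      #(B j) ^ s := fun j => by simp [Fintype.card_piFinset, Fin.prod_univ_succ]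
  calc (#Q : ℝ) ≤ ∑ j ∈ J, (#(B j) : ℝ) ^ s := by
        exact_mod_cast (Finset.card_le_card hQJ).trans (card_biUnion_le.trans_eq (sum_congr rfl
          fun j _ => hpi j))
    _ ≤ ∑ _j ∈ J, r ^ s :=
        sum_le_sum fun j hj => pow_le_pow_left₀ (Nat.cast_nonneg _) (mem_filter.1 hj).2 s
    _ ≤ Fintype.card α * r ^ s := by
        rw [sum_const, nsmul_eq_mul]
        gcongr
        exact_mod_cast card_le_univ J

lemma le_card_of_card_filter_not_le {α : Type*} [Fintype α] (p : α → Prop) [DecidablePred p]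
    {b : ℝ} (h : (#{x | ¬ p x} : ℝ) ≤ b) : (Fintype.card α : ℝ) - b ≤ Nat.card {x // p x} := by
  have hsplit : (#{x | p x} : ℝ) + #{x | ¬ p x} = Fintype.card α := by
    exact_mod_cast card_filter_add_card_filter_not (s := univ) p
  rw [Nat.card_eq_fintype_card, Fintype.card_subtype]
  linarith

end Counting

lemma pow_le_of_ceil_log_le {lam : ℝ} (hlam : 0 < lam) {s : ℕ}
    (hs : ⌈5 * Real.log (1 / lam)⌉₊ ≤ s) : (8 / 11 : ℝ) ^ s ≤ lam := by
  have h811 : (8 / 11 : ℝ) ≤ Real.exp (-(1 / 5)) := by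
    linarith [Real.add_one_le_exp (-(1 / 5))]
  have hlog : Real.log (1 / lam) ≤ s / 5 := by
    linarith [(Nat.le_ceil _).trans (Nat.cast_le.2 hs : (⌈5 * Real.log (1 / lam)⌉₊ : ℝ) ≤ s)]
  calc (8 / 11 : ℝ) ^ s ≤ Real.exp (-(1 / 5)) ^ s := pow_le_pow_left₀ (by norm_num) h811 s
    _ = Real.exp (-(s / 5)) := by rw [← Real.exp_nat_mul]; ring_nf
    _ ≤ Real.exp (-Real.log (1 / lam)) := Real.exp_le_exp.2 (neg_le_neg hlog)
    _ = lam := by rw [one_div, Real.log_inv, neg_neg, Real.exp_log hlam]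

section Median

open Finset

variable {n ℓ : ℕ} {τ : ℕ → ℝ → ℝ} {c c' : ℝ → ℝ}

lemma opt1_le_cost1 (hc' : InDeltaL ℓ c') : opt1 n τ ℓ ≤ cost1 n τ c' :=
  csInf_le ⟨0, by rintro _ ⟨_, -, rfl⟩; exact sum_nonneg fun _ _ => frechetDist_nonneg _ _⟩
    ⟨c', hc', rfl⟩

lemma card_frechetDist_le_div_four_le (hτ : ∀ i < n, IsBounded (τ i '' Icc 0 1))
    (hc : IsBounded (c '' Icc 0 1)) (hc' : IsBounded (c' '' Icc 0 1)) {Δ : ℝ} (hΔ : 0 < Δ)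
    (hΔc : ∀ i < n, Δ ≤ frechetDist (τ i) c) (hcost : cost1 n τ c ≤ cost1 n τ c') :
    (#{i : Fin n | frechetDist (τ i) c' ≤ Δ / 4} : ℝ) ≤ 8 / 11 * n := by
  have hτ' (i : Fin n) := hτ i i.2
  simpa using card_filter_le_of_sum_le_sum (a := fun i : Fin n => frechetDist (τ i) c)
    (b := fun i => frechetDist (τ i) c') (D := frechetDist c c') hΔ (fun i => hΔc i i.2)
    (fun i => frechetDist_triangle (hτ' i) hc hc')
    (fun i => (frechetDist_triangle hc (hτ' i) hc').trans_eq
      (by rw [frechetDist_comm hc (hτ' i)]))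
    ((Fin.sum_univ_eq_sum_range _ n).trans_le
      (hcost.trans_eq (Fin.sum_univ_eq_sum_range _ n).symm))

lemma exists_forall_frechetDist_lt_of_sInf_lt {κ : Type*} [Fintype κ] (ι : κ → ℕ) {r : ℝ}
    (hc : InDeltaL ℓ c)
    (h : sInf {d : ℝ | ∃ c' : ℝ → ℝ, InDeltaL ℓ c' ∧ d = ∑ k, frechetDist (τ (ι k)) c'} < r) :
    ∃ c', InDeltaL ℓ c' ∧ ∀ k, frechetDist (τ (ι k)) c' < r := by
  obtain ⟨_, ⟨c', hc', rfl⟩, hlt⟩ := exists_lt_of_csInf_lt (by exact ⟨_, c, hc, rfl⟩) h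
  exact ⟨c', hc', fun k => (single_le_sum (fun k _ => frechetDist_nonneg (τ (ι k)) c')
    (mem_univ k)).trans_lt hlt⟩

lemma forall_mem_ball_and_card_ball_le (hτ : ∀ i < n, IsBounded (τ i '' Icc 0 1))
    (hc : InDeltaL ℓ c) (hopt : cost1 n τ c = opt1 n τ ℓ) {Δ : ℝ}
    (hΔc : ∀ i < n, Δ ≤ frechetDist (τ i) c) {κ : Type*} [Fintype κ] (ι : κ → Fin n) (k₀ : κ)
    (hι : 12 * sInf {d : ℝ | ∃ c' : ℝ → ℝ, InDeltaL ℓ c' ∧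
      d = ∑ k, frechetDist (τ (ι k)) c'} < Δ) :
    (∀ k, frechetDist (τ (ι k)) (τ (ι k₀)) ≤ Δ / 6) ∧
      (#{i : Fin n | frechetDist (τ i) (τ (ι k₀)) ≤ Δ / 6} : ℝ) ≤ 8 / 11 * n := by
  obtain ⟨c', hc', hlt⟩ := exists_forall_frechetDist_lt_of_sInf_lt (τ := τ) (fun k => (ι k : ℕ))
    hc (by linarith : _ < Δ / 12)
  have hΔ : 0 < Δ := by linarith [frechetDist_nonneg (τ (ι k₀)) c', hlt k₀]
  have hτ' (k : κ) := hτ (ι k) (ι k).2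
  have hb' := hc'.isBounded_image
  refine ⟨fun k => ?_, le_trans ?_ (card_frechetDist_le_div_four_le hτ hc.isBounded_image hb' hΔ
    hΔc (hopt ▸ opt1_le_cost1 hc'))⟩
  · calc frechetDist (τ (ι k)) (τ (ι k₀))
        ≤ frechetDist (τ (ι k)) c' + frechetDist c' (τ (ι k₀)) :=
          frechetDist_triangle (hτ' k) hb' (hτ' k₀)
      _ = frechetDist (τ (ι k)) c' + frechetDist (τ (ι k₀)) c' := by
          rw [frechetDist_comm hb' (hτ' k₀)]
      _ ≤ Δ / 6 := by linarith [hlt k, hlt k₀]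
  · refine Nat.cast_le.2 (Finset.card_le_card (monotone_filter_right _ fun i _ hi => ?_))
    calc frechetDist (τ i) c' ≤ frechetDist (τ i) (τ (ι k₀)) + frechetDist (τ (ι k₀)) c' :=
          frechetDist_triangle (hτ i i.2) (hτ' k₀) hb'
      _ ≤ Δ / 4 := by linarith [hlt k₀, hi]

end Median

theorem diam_sample_general (lam : ℝ) (hlam0 : 0 < lam)
    (n : ℕ) (hn : 0 < n) (τ : ℕ → ℝ → ℝ)
    (hP : ∀ i, i < n → ∃ m t w, IsPolyOn (τ i) m t w ∧ GenPos m w)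
    (ℓ : ℕ) (c : ℝ → ℝ) (hc : InDeltaL ℓ c)
    (hopt : cost1 n τ c = opt1 n τ ℓ)
    (s : ℕ) (hs : ⌈5 * Real.log (1 / lam)⌉₊ + 1 ≤ s) :
    (1 - lam) * ((n : ℝ) ^ s) ≤
      Nat.card {ι : Fin s → Fin n //
        (Finset.range n).inf' (Finset.nonempty_range_iff.mpr hn.ne')
            (fun i => frechetDist (τ i) c) ≤
          12 * sInf {d : ℝ | ∃ c' : ℝ → ℝ, InDeltaL ℓ c' ∧
              d = ∑ k : Fin s, frechetDist (τ (ι k)) c'}} := by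
  classical
  obtain ⟨s, rfl⟩ : ∃ s', s = s' + 1 := ⟨s - 1, by omega⟩
  set Δ := (Finset.range n).inf' (Finset.nonempty_range_iff.mpr hn.ne')
    (fun i => frechetDist (τ i) c)
  have hτ : ∀ i < n, IsBounded (τ i '' Icc 0 1) := fun i hi =>
    let ⟨_, _, _, hpoly, _⟩ := hP i hi
    hpoly.isBounded_image
  have hΔc : ∀ i < n, Δ ≤ frechetDist (τ i) c := fun i hi =>
    Finset.inf'_le _ (Finset.mem_range.2 hi)
  have hpow := pow_le_of_ceil_log_le hlam0 (Nat.le_of_succ_le_succ hs)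
  refine le_trans ?_ (le_card_of_card_filter_not_le _ (card_le_of_forall_mem_of_card_le
    (fun j => Finset.univ.filter fun i : Fin n => frechetDist (τ i) (τ j) ≤ Δ / 6) _
    (r := 8 / 11 * n) (by positivity) fun ι hι => ?_))
  · simp only [Fintype.card_fun, Fintype.card_fin, Nat.cast_pow]
    have hns : (0 : ℝ) ≤ n ^ (s + 1) := by positivity
    calc (1 - lam) * n ^ (s + 1) ≤ n ^ (s + 1) - (8 / 11) ^ s * n ^ (s + 1) := by nlinarith
      _ = n ^ (s + 1) - n * (8 / 11 * n) ^ s := by ring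
  · obtain ⟨hball, hcard⟩ := forall_mem_ball_and_card_ball_le hτ hc hopt hΔc ι 0
      (not_le.1 (Finset.mem_filter.1 hι).2)
    exact ⟨fun k => Finset.mem_filter.2 ⟨Finset.mem_univ _, hball k⟩, hcard⟩

/-- Lemma 5.6: let `c ∈ Δ_ℓ` be an optimal `(1,ℓ)`-median of
`P = {τ 0, …, τ (n-1)}` (curves in general position). For a uniform sample
multiset `S` of size `s ≥ ⌈5 ln(1/λ)⌉ + 1` (with replacement, encoded by
`ι : Fin s → Fin n` uniform) it holds that
`Pr[12·opt^{(1)}_{1,ℓ}(S) ≥ min_{τ ∈ P} d_F(τ, c)] ≥ 1 - λ`. -/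
theorem diam_sample (lam : ℝ) (hlam0 : 0 < lam) (hlam1 : lam < 1)
    (n : ℕ) (hn : 0 < n) (τ : ℕ → ℝ → ℝ)
    (hP : ∀ i, i < n → ∃ m t w, IsPolyOn (τ i) m t w ∧ GenPos m w)
    (ℓ : ℕ) (c : ℝ → ℝ) (hc : InDeltaL ℓ c)
    (hopt : cost1 n τ c = opt1 n τ ℓ)
    (s : ℕ) (hs : ⌈5 * Real.log (1 / lam)⌉₊ + 1 ≤ s) :
    (1 - lam) * ((n : ℝ) ^ s) ≤
      Nat.card {ι : Fin s → Fin n //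
        (Finset.range n).inf' (Finset.nonempty_range_iff.mpr hn.ne')
            (fun i => frechetDist (τ i) c) ≤
          12 * sInf {d : ℝ | ∃ c' : ℝ → ℝ, InDeltaL ℓ c' ∧
              d = ∑ k : Fin s, frechetDist (τ (ι k)) c'}} :=
  diam_sample_general lam hlam0 n hn τ hP ℓ c hc hopt s hs
end
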